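/- Let D◇ be an r-equireplicate and linear design of order k on V = {1,…,n}, let X₁,…,Xₙ be i.i.d., and let h be a symmetric measurable kernel of k arguments with σ_k² < ∞. Then the variance of the incomplete U-statistic is Var U_{n,D◇}^{(k)} = (k²(r−1)σ₁² + k·σ_k²)/(n·r), and this variance is minimal among all incomplete U-statistics of order k with the same design size: for every design D' ⊆ B_k with |D'| = |D◇| one has Var U_{n,D◇}^{(k)} ≤ Var U_{n,D'}^{(k)}. -/

import Mathlib

/-!
Block variables with overlap `c` have covariance `σ_c`, so
`Var U_D = |D|⁻² ∑_{S,S' ∈ D} σ_{|S ∩ S'|}`, and `σ_0 = 0` by independence. Double counting gives `∑_{S,S'} |S ∩ S'| = ∑_v deg(v)²`, which is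
`n r²` for an `r`-equireplicate design and at least `n r²` for every design of the same size, by
Cauchy–Schwarz. In a linear design each off-diagonal term is `0` or `σ_1`, while in general
`σ_c ≥ c σ_1`; hence the linear equireplicate design minimises the double sum.

Both `σ_c ≥ c σ_1` and `σ_1 ≥ 0` follow from positive semidefiniteness of `(S, S') ↦ σ_{|S ∩ S'|}`
on `k`-sets alone: padding cores with private petals realises any family of cores of size `≤ k`,
and taking `M` copies of a core of size `c` with weight `1` and of each of its singletons with
weight `-1` makes the quadratic form `M² (σ_c - c σ_1) + O(M)`.
-/

open MeasureTheory ProbabilityTheory Filter Finset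

namespace IUStat

/-- Degree of an index `v` in a design `D`: number of blocks containing `v`. -/
def degree (D : Finset (Finset ℕ)) (v : ℕ) : ℕ := (D.filter (fun S => v ∈ S)).card

/-- Maximum degree of the hypergraph of a design on `V = {1,…,n}`. -/
def maxDegree (n : ℕ) (D : Finset (Finset ℕ)) : ℕ := (Finset.Icc 1 n).sup (degree D)

/-- Degree of a block `S` in the line graph `L(D)` (counting `S` itself). -/
def lineDegree (D : Finset (Finset ℕ)) (S : Finset ℕ) : ℕ :=
  (D.filter (fun S' => (S ∩ S').Nonempty)).card

/-- Maximum degree of the line graph of a design. -/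
def maxLineDegree (D : Finset (Finset ℕ)) : ℕ := D.sup (lineDegree D)

/-- The random variable `h(S)` obtained by applying the symmetric kernel `h` to the
sample values indexed by the (sorted) elements of the block `S`.  Since `h` is
symmetric in its arguments, the choice of the increasing enumeration is immaterial. -/
noncomputable def blockRV {Ω T : Type*} [MeasurableSpace T] {k : ℕ}
    (X : ℕ → Ω → T) (h : (Fin k → T) → ℝ) (S : Finset ℕ) : Ω → ℝ :=
  fun ω => h (fun j => X ((S.sort (· ≤ ·)).getD (j : ℕ) 0) ω)

/-- The incomplete U-statistic of design `D`. -/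
noncomputable def ustat {Ω T : Type*} [MeasurableSpace T] {k : ℕ}
    (D : Finset (Finset ℕ)) (X : ℕ → Ω → T) (h : (Fin k → T) → ℝ) : Ω → ℝ :=
  fun ω => (D.card : ℝ)⁻¹ * ∑ S ∈ D, blockRV X h S ω

/-- Covariance of two real random variables. -/
noncomputable def covRV {Ω : Type*} [MeasurableSpace Ω] (P : Measure Ω) (f g : Ω → ℝ) : ℝ :=
  ∫ ω, (f ω - ∫ x, f x ∂P) * (g ω - ∫ x, g x ∂P) ∂P

/-- Standard normal CDF. -/
noncomputable def Φ : ℝ → ℝ := fun z => ProbabilityTheory.cdf (gaussianReal 0 1) z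

/-- `a mod m` with a remainder of zero relabeled as `m`. -/
def modr (a m : ℕ) : ℕ := if a % m = 0 then m else a % m

/-- Unbiased sample variance of the collection `{h(S) : S ∈ D}`. -/
noncomputable def sampleVar {Ω T : Type*} [MeasurableSpace T] {k : ℕ}
    (D : Finset (Finset ℕ)) (X : ℕ → Ω → T) (h : (Fin k → T) → ℝ) : Ω → ℝ :=
  fun ω => ((D.card : ℝ) - 1)⁻¹ * ∑ S ∈ D, (blockRV X h S ω - ustat D X h ω) ^ 2

section Probability

variable {Ω T : Type*} [MeasurableSpace Ω] {mT : MeasurableSpace T} {P : Measure Ω} {k : ℕ}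
  {X : ℕ → Ω → T} {h : (Fin k → T) → ℝ}

theorem getD_sort_mem {S : Finset ℕ} (hS : #S = k) (j : Fin k) :
    (S.sort (· ≤ ·)).getD j 0 ∈ S := by
  rw [List.getD_eq_getElem _ _ (by simp [hS])]
  exact (mem_sort _).mp (List.getElem_mem _)

theorem indepFun_blockRV_of_disjoint (hX : ∀ i, Measurable (X i)) (hXi : iIndepFun X P)
    (hh : Measurable h) {S₁ S₂ : Finset ℕ} (h₁ : #S₁ = k) (h₂ : #S₂ = k) (hd : Disjoint S₁ S₂) :
    IndepFun (blockRV X h S₁) (blockRV X h S₂) P := by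
  have hφ : ∀ {S : Finset ℕ} (hS : #S = k),
      Measurable fun g : S → T => h fun j => g ⟨_, getD_sort_mem hS j⟩ := fun _ =>
    hh.comp (measurable_pi_lambda _ fun _ => measurable_pi_apply _)
  exact (hXi.indepFun_finset S₁ S₂ hd hX).comp (hφ h₁) (hφ h₂)

theorem sigma_zero_of_iIndepFun (hX : ∀ i, Measurable (X i)) (hXi : iIndepFun X P)
    (hh : Measurable h) {σ : ℕ → ℝ} (hL2 : ∀ S : Finset ℕ, #S = k → MemLp (blockRV X h S) 2 P)
    (hcov : ∀ S₁ S₂ : Finset ℕ, #S₁ = k → #S₂ = k →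
      covRV P (blockRV X h S₁) (blockRV X h S₂) = σ #(S₁ ∩ S₂)) :
    σ 0 = 0 := by
  have h₁ : #(Ico 0 k) = k := by simp
  have h₂ : #(Ico k (k + k)) = k := by simp
  have hd := Ico_disjoint_Ico_consecutive 0 k (k + k)
  calc σ 0 = σ #(Ico 0 k ∩ Ico k (k + k)) := by rw [disjoint_iff_inter_eq_empty.mp hd, card_empty]
    _ = cov[blockRV X h (Ico 0 k), blockRV X h (Ico k (k + k)); P] := (hcov _ _ h₁ h₂).symm
    _ = 0 := (indepFun_blockRV_of_disjoint hX hXi hh h₁ h₂ hd).covariance_eq_zero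
      (hL2 _ h₁) (hL2 _ h₂)

variable [IsFiniteMeasure P]

theorem variance_ustat {σ : ℕ → ℝ} (hL2 : ∀ S : Finset ℕ, #S = k → MemLp (blockRV X h S) 2 P)
    (hcov : ∀ S₁ S₂ : Finset ℕ, #S₁ = k → #S₂ = k →
      covRV P (blockRV X h S₁) (blockRV X h S₂) = σ #(S₁ ∩ S₂))
    {E : Finset (Finset ℕ)} (hE : ∀ S ∈ E, #S = k) :
    variance (ustat E X h) P = ((#E : ℝ)⁻¹) ^ 2 * ∑ S ∈ E, ∑ S' ∈ E, σ #(S ∩ S') := by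
  rw [show ustat E X h = fun ω => (#E : ℝ)⁻¹ * ∑ S ∈ E, blockRV X h S ω from rfl,
    variance_const_mul, variance_fun_sum' fun S hS => hL2 S (hE S hS)]
  congr 1
  exact sum_congr rfl fun S hS => sum_congr rfl fun S' hS' => hcov S S' (hE S hS) (hE S' hS')

def IntersectionPosSemidef (k : ℕ) (σ : ℕ → ℝ) : Prop :=
  ∀ ⦃ι : Type⦄ (s : Finset ι) (β : ι → Finset ℕ) (a : ι → ℝ), (∀ i ∈ s, #(β i) = k) →
    0 ≤ ∑ i ∈ s, ∑ j ∈ s, a i * a j * σ #(β i ∩ β j)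

theorem intersectionPosSemidef_of_covRV {σ : ℕ → ℝ}
    (hL2 : ∀ S : Finset ℕ, #S = k → MemLp (blockRV X h S) 2 P)
    (hcov : ∀ S₁ S₂ : Finset ℕ, #S₁ = k → #S₂ = k →
      covRV P (blockRV X h S₁) (blockRV X h S₂) = σ #(S₁ ∩ S₂)) :
    IntersectionPosSemidef k σ := by
  intro ι s β a hβ
  have hvar := variance_nonneg (fun ω => ∑ i ∈ s, a i * blockRV X h (β i) ω) P
  rw [variance_fun_sum' fun i hi => (hL2 _ (hβ i hi)).const_mul (a i)] at hvar
  refine hvar.trans_eq (sum_congr rfl fun i hi => sum_congr rfl fun j hj => ?_)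
  rw [covariance_const_mul_left, covariance_const_mul_right, ← hcov _ _ (hβ i hi) (hβ j hj),
    mul_assoc]
  rfl

end Probability

theorem nonneg_of_forall_nat_sq_mul_add {d e : ℝ} (h : ∀ M : ℕ, 0 ≤ (M : ℝ) ^ 2 * d + M * e) :
    0 ≤ d := by
  by_contra! hd
  obtain ⟨M, hM⟩ := exists_nat_gt (e / -d)
  have hM' : e < (M + 1) * -d := by
    rw [div_lt_iff₀ (neg_pos.2 hd)] at hM
    linarith
  have := h (M + 1)
  push_cast at this
  nlinarith

namespace IntersectionPosSemidef

variable {k : ℕ} {σ : ℕ → ℝ}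

theorem sum_sum_ite_nonneg (hσ : IntersectionPosSemidef k σ) {ι : Type} [Encodable ι]
    [DecidableEq ι] (s : Finset ι) (K : ι → Finset ℕ) (hK : ∀ i ∈ s, #(K i) ≤ k) (a : ι → ℝ) :
    0 ≤ ∑ i ∈ s, ∑ j ∈ s, a i * a j * σ (if i = j then k else #(K i ∩ K j)) := by
  -- distinct padded sets `β i`, `β j` meet exactly in `K i ∩ K j`
  let e : ℕ ⊕ (ι × ℕ) ↪ ℕ := ⟨Encodable.encode, Encodable.encode_injective⟩
  let petal i := range (k - #(K i))
  let β i := ((K i).disjSum ({i} ×ˢ petal i)).map e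
  have hinter : ∀ i j,
      β i ∩ β j = ((K i ∩ K j).disjSum (({i} ∩ {j}) ×ˢ (petal i ∩ petal j))).map e := by
    intro i j
    rw [← map_inter, ← product_inter_product]
    congr 1
    ext (x | x) <;> simp
  have hβ : ∀ i ∈ s, #(β i) = k := fun i hi => by
    simp only [β, petal, card_map, card_disjSum, card_product, card_singleton, card_range]
    have := hK i hi
    omega
  refine (hσ s β a hβ).trans_eq (sum_congr rfl fun i hi => sum_congr rfl fun j _ => ?_)
  split_ifs with hij
  · rw [hij, inter_self, hβ j (hij ▸ hi)]
  · simp [hinter, hij]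

theorem sum_sum_cores_nonneg (hσ : IntersectionPosSemidef k σ) {ι : Type} [Encodable ι]
    [DecidableEq ι] (t : Finset ι) (C : ι → Finset ℕ) (hC : ∀ g ∈ t, #(C g) ≤ k) (w : ι → ℝ) :
    0 ≤ ∑ g ∈ t, ∑ g' ∈ t, w g * w g' * σ #(C g ∩ C g') := by
  refine nonneg_of_forall_nat_sq_mul_add (e := ∑ g ∈ t, w g ^ 2 * (σ k - σ #(C g))) fun M => ?_
  have hsplit : ∀ p q : ι × ℕ, w p.1 * w q.1 * σ (if p = q then k else #(C p.1 ∩ C q.1)) =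
      w p.1 * w q.1 * σ #(C p.1 ∩ C q.1) + if p = q then w p.1 ^ 2 * (σ k - σ #(C p.1)) else 0 := by
    rintro p q
    split_ifs with hpq
    · rw [hpq, inter_self]
      ring
    · rw [add_zero]
  have := hσ.sum_sum_ite_nonneg (t ×ˢ range M) (fun p => C p.1)
    (fun p hp => hC _ (mem_product.1 hp).1) (fun p => w p.1)
  rw [sum_congr rfl fun p hp => by
    rw [sum_congr rfl fun q _ => hsplit p q, sum_add_distrib, sum_ite_eq_of_mem _ _ _ hp]] at this
  convert this using 1
  simp only [sum_add_distrib, sum_product, sum_const, card_range, nsmul_eq_mul, mul_sum]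
  congr 1
  exact sum_congr rfl fun g _ => sum_congr rfl fun g' _ => by ring

theorem nonneg (hσ : IntersectionPosSemidef k σ) {c : ℕ} (hc : c ≤ k) : 0 ≤ σ c := by
  simpa using hσ.sum_sum_cores_nonneg {()} (fun _ => range c) (by simpa using hc) 1

theorem mul_le (hσ : IntersectionPosSemidef k σ) (hσ0 : σ 0 = 0) {c : ℕ} (hc : c ≤ k) :
    c * σ 1 ≤ σ c := by
  have := hσ.sum_sum_cores_nonneg (insertNone (range c)) (fun o => o.elim (range c) singleton)
    (by rintro (_ | j) hj <;> simp at hj ⊢ <;> omega) (fun o => o.elim 1 fun _ => -1)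
  have hcore : ∑ j ∈ range c, σ #(range c ∩ {j}) = c * σ 1 := by
    rw [sum_congr rfl fun j hj => by rw [inter_singleton_of_mem hj, card_singleton]]
    simp
  have hpairs : ∑ j ∈ range c, ∑ j' ∈ range c, σ #({j} ∩ {j'}) = c * σ 1 := by
    rw [sum_congr rfl fun j hj =>
      sum_eq_single_of_mem j hj fun j' _ hne => by simp [hne.symm, hσ0]]
    simp
  simp only [sum_insertNone, Option.elim, inter_self, card_range, mul_one, one_mul, mul_neg,
    neg_mul, sum_neg_distrib, sum_add_distrib, inter_comm {_} (range c), hcore,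
    hpairs] at this
  linarith

end IntersectionPosSemidef

theorem card_mul_sq_le_sum_sq {ι : Type*} {s : Finset ι} {f : ι → ℕ} {r : ℕ}
    (h : ∑ i ∈ s, f i = #s * r) : #s * r ^ 2 ≤ ∑ i ∈ s, f i ^ 2 := by
  rcases (#s).eq_zero_or_pos with hs | hs
  · simp [hs]
  refine Nat.le_of_mul_le_mul_left ?_ hs
  calc #s * (#s * r ^ 2) = (∑ i ∈ s, f i) ^ 2 := by rw [h]; ring
    _ ≤ #s * ∑ i ∈ s, f i ^ 2 := sq_sum_le_card_mul_sum_sq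

section Designs

variable {V : Finset ℕ} {E : Finset (Finset ℕ)}

theorem sum_degree (hE : ∀ S ∈ E, S ⊆ V) : ∑ v ∈ V, degree E v = ∑ S ∈ E, #S := by
  have := sum_card_bipartiteAbove_eq_sum_card_bipartiteBelow (s := E) (t := V)
    (r := fun S v => v ∈ S)
  simp only [bipartiteAbove, filter_mem_eq_inter] at this
  rw [← sum_congr rfl fun S hS => congrArg card (inter_eq_right.2 (hE S hS)), this]
  rfl

theorem sum_sum_card_inter (hE : ∀ S ∈ E, S ⊆ V) :
    ∑ S ∈ E, ∑ S' ∈ E, #(S ∩ S') = ∑ v ∈ V, degree E v ^ 2 := by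
  calc ∑ S ∈ E, ∑ S' ∈ E, #(S ∩ S')
      = ∑ p ∈ E ×ˢ E, #{v ∈ V | v ∈ p.1 ∧ v ∈ p.2} := by
        rw [sum_product]
        refine sum_congr rfl fun S hS => sum_congr rfl fun S' _ => ?_
        simp only [← mem_inter, filter_mem_eq_inter,
          inter_eq_right.2 (inter_subset_left.trans (hE S hS))]
    _ = ∑ v ∈ V, #{p ∈ E ×ˢ E | v ∈ p.1 ∧ v ∈ p.2} :=
        sum_card_bipartiteAbove_eq_sum_card_bipartiteBelow _
    _ = ∑ v ∈ V, degree E v ^ 2 := sum_congr rfl fun v _ => by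
        rw [filter_product (p := (v ∈ ·)) (q := (v ∈ ·)), card_product, sq]
        rfl

theorem sum_sum_card_inter_mul_add (hE : ∀ S ∈ E, S ⊆ V) (x y : ℝ) :
    ∑ S ∈ E, ∑ S' ∈ E, (#(S ∩ S') * x + if S = S' then y else 0) =
      (∑ v ∈ V, degree E v ^ 2 : ℕ) * x + #E * y := by
  simp only [sum_add_distrib, ← sum_mul, sum_ite_eq, ← sum_sum_card_inter hE]
  simp

variable {k : ℕ} {σ : ℕ → ℝ}

theorem sum_degree_eq_card_mul (hE : ∀ S ∈ E, #S = k ∧ S ⊆ V) :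
    ∑ v ∈ V, degree E v = #E * k := by
  rw [sum_degree fun S hS => (hE S hS).2, sum_congr rfl fun S hS => (hE S hS).1, sum_const,
    smul_eq_mul]

theorem sum_sum_sigma_eq_of_linear (hσ0 : σ 0 = 0) (hE : ∀ S ∈ E, #S = k ∧ S ⊆ V)
    (hlin : ∀ S₁ ∈ E, ∀ S₂ ∈ E, S₁ ≠ S₂ → #(S₁ ∩ S₂) ≤ 1) :
    ∑ S ∈ E, ∑ S' ∈ E, σ #(S ∩ S') =
      (∑ v ∈ V, degree E v ^ 2 : ℕ) * σ 1 + #E * (σ k - k * σ 1) := by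
  rw [← sum_sum_card_inter_mul_add fun S hS => (hE S hS).2]
  refine sum_congr rfl fun S hS => sum_congr rfl fun S' hS' => ?_
  split_ifs with hSS'
  · rw [hSS', inter_self, (hE S' hS').1]
    ring
  · have := hlin S hS S' hS' hSS'
    interval_cases #(S ∩ S') <;> simp [hσ0]

theorem le_sum_sum_sigma (hσ : IntersectionPosSemidef k σ) (hσ0 : σ 0 = 0) (hk : 0 < k)
    {r : ℕ} (hE : ∀ S ∈ E, #S = k ∧ S ⊆ V) (hr : #E * k = #V * r) :
    #V * r ^ 2 * σ 1 + #E * (σ k - k * σ 1) ≤ ∑ S ∈ E, ∑ S' ∈ E, σ #(S ∩ S') := by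
  have hdeg : #V * r ^ 2 ≤ ∑ v ∈ V, degree E v ^ 2 :=
    card_mul_sq_le_sum_sq (by rw [sum_degree_eq_card_mul hE, hr])
  calc #V * r ^ 2 * σ 1 + #E * (σ k - k * σ 1)
      ≤ (∑ v ∈ V, degree E v ^ 2 : ℕ) * σ 1 + #E * (σ k - k * σ 1) := by
        gcongr
        · exact hσ.nonneg hk
        · exact_mod_cast hdeg
    _ = ∑ S ∈ E, ∑ S' ∈ E, (#(S ∩ S') * σ 1 + if S = S' then σ k - k * σ 1 else 0) :=
        (sum_sum_card_inter_mul_add (fun S hS => (hE S hS).2) _ _).symm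
    _ ≤ ∑ S ∈ E, ∑ S' ∈ E, σ #(S ∩ S') := sum_le_sum fun S hS => sum_le_sum fun S' hS' => by
        split_ifs with hSS'
        · rw [hSS', inter_self, (hE S' hS').1]
          linarith
        · rw [add_zero]
          exact hσ.mul_le hσ0 ((card_le_card inter_subset_left).trans (hE S hS).1.le)

end Designs

theorem variance_equireplicate_linear_min_general {Ω T : Type*} [MeasurableSpace Ω] {mT : MeasurableSpace T}
    (P : Measure Ω) [IsProbabilityMeasure P]
    (X : ℕ → Ω → T) (hXmeas : ∀ i, Measurable (X i))
    (hXindep : iIndepFun (m := fun _ => mT) X P)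
    (n k r : ℕ) (h : (Fin k → T) → ℝ) (hhmeas : Measurable h)
    (D : Finset (Finset ℕ))
    (hD : ∀ S ∈ D, S.card = k ∧ S ⊆ Finset.Icc 1 n)
    (hequi : ∀ v ∈ Finset.Icc 1 n, degree D v = r)
    (hlin : ∀ S₁ ∈ D, ∀ S₂ ∈ D, S₁ ≠ S₂ → (S₁ ∩ S₂).card ≤ 1)
    (σsq : ℕ → ℝ)
    (hL2 : ∀ S : Finset ℕ, S.card = k → MemLp (blockRV X h S) 2 P)
    (hcov : ∀ S₁ S₂ : Finset ℕ, S₁.card = k → S₂.card = k →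
      covRV P (blockRV X h S₁) (blockRV X h S₂) = σsq (S₁ ∩ S₂).card) :
    variance (ustat D X h) P
        = ((k : ℝ) ^ 2 * ((r : ℝ) - 1) * σsq 1 + (k : ℝ) * σsq k) / ((n : ℝ) * (r : ℝ)) ∧
    ∀ D' : Finset (Finset ℕ), (∀ S ∈ D', S.card = k ∧ S ⊆ Finset.Icc 1 n) →
      D'.card = D.card →
      variance (ustat D X h) P ≤ variance (ustat D' X h) P := by
  have hσ0 := sigma_zero_of_iIndepFun hXmeas hXindep hhmeas hL2 hcov
  have hV : #(Icc 1 n) = n := by simp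
  have hmk : #D * k = n * r := by
    rw [← sum_degree_eq_card_mul hD, sum_congr rfl hequi, sum_const, hV, smul_eq_mul]
  have hvarD : variance (ustat D X h) P =
      ((#D : ℝ)⁻¹) ^ 2 * (n * r ^ 2 * σsq 1 + #D * (σsq k - k * σsq 1)) := by
    rw [variance_ustat hL2 hcov fun S hS => (hD S hS).1, sum_sum_sigma_eq_of_linear hσ0 hD hlin,
      sum_congr rfl fun v hv => by rw [hequi v hv]]
    simp
  have hformula : variance (ustat D X h) P =
      ((k : ℝ) ^ 2 * ((r : ℝ) - 1) * σsq 1 + (k : ℝ) * σsq k) / ((n : ℝ) * (r : ℝ)) := by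
    have hmk' : (#D : ℝ) * k = n * r := by exact_mod_cast hmk
    rw [hvarD, show (n : ℝ) * r ^ 2 = n * r * r by ring, ← hmk']
    rcases eq_or_ne k 0 with rfl | hk
    · simp [hσ0]
    rcases eq_or_ne #D 0 with hm | hm
    · simp [hm]
    field_simp
    ring
  refine ⟨hformula, fun D' hD' hcard => ?_⟩
  obtain rfl | hk := k.eq_zero_or_pos
  · simp [hformula]
  rw [hvarD, variance_ustat hL2 hcov fun S hS => (hD' S hS).1, ← hcard]
  gcongr
  simpa [hV] using le_sum_sum_sigma (intersectionPosSemidef_of_covRV hL2 hcov) hσ0 hk hD'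
    (by rw [hcard, hmk, hV])

/-- For an `r`-equireplicate linear design `D◇` of order `k`, the
incomplete U-statistic has variance `(k²(r−1)σ₁² + k σ_k²)/(n r)`, minimal among all
incomplete U-statistics of order `k` with the same design size. -/
theorem variance_equireplicate_linear_min {Ω T : Type*} [MeasurableSpace Ω] {mT : MeasurableSpace T}
    (P : Measure Ω) [IsProbabilityMeasure P]
    (X : ℕ → Ω → T) (hXmeas : ∀ i, Measurable (X i))
    (hXindep : iIndepFun (m := fun _ => mT) X P)
    (hXident : ∀ i j, IdentDistrib (X i) (X j) P P)
    (n k r : ℕ) (h : (Fin k → T) → ℝ) (hhmeas : Measurable h)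
    (hhsymm : ∀ (e : Equiv.Perm (Fin k)) (x : Fin k → T), h (x ∘ e) = h x)
    (D : Finset (Finset ℕ)) (hDne : D.Nonempty)
    (hD : ∀ S ∈ D, S.card = k ∧ S ⊆ Finset.Icc 1 n)
    (hequi : ∀ v ∈ Finset.Icc 1 n, degree D v = r)
    (hlin : ∀ S₁ ∈ D, ∀ S₂ ∈ D, S₁ ≠ S₂ → (S₁ ∩ S₂).card ≤ 1)
    (σsq : ℕ → ℝ)
    (hL2 : ∀ S : Finset ℕ, S.card = k → MemLp (blockRV X h S) 2 P)
    (hcov : ∀ S₁ S₂ : Finset ℕ, S₁.card = k → S₂.card = k →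
      covRV P (blockRV X h S₁) (blockRV X h S₂) = σsq (S₁ ∩ S₂).card) :
    variance (ustat D X h) P
        = ((k : ℝ) ^ 2 * ((r : ℝ) - 1) * σsq 1 + (k : ℝ) * σsq k) / ((n : ℝ) * (r : ℝ)) ∧
    ∀ D' : Finset (Finset ℕ), (∀ S ∈ D', S.card = k ∧ S ⊆ Finset.Icc 1 n) →
      D'.card = D.card →
      variance (ustat D X h) P ≤ variance (ustat D' X h) P :=
  variance_equireplicate_linear_min_general P X hXmeas hXindep n k r h hhmeas D hD hequi hlin σsq
    hL2 hcov

end IUStat
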